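/- Let E be a vector lattice over ℝ, let Y be a real vector space, let n be a positive integer, and let T : E^n → Y be an n-linear map whose restriction to (E⁺)^n is total orderization invariant. Then T(f_1,...,f_n) = 0 whenever f_1,...,f_n ∈ E⁺ and f_i ⊓ f_j = 0 for some i,j ∈ {1,...,n} with i ≠ j. -/

import Mathlib

open Finset

/-- `Mk x k` is `M_{k+1}(x_1,...,x_n)` (`k : Fin n` represents the 1-indexed index `k+1`):
the supremum over all subsets `I` of `{1,...,n}` of cardinality `n + 1 - (k+1) = n - k` of
the infima `⋀_{i ∈ I} x i`. -/
def Mk {L : Type*} [Lattice L] {n : ℕ} (x : Fin n → L) (k : Fin n) : L :=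
  ((univ : Finset (Fin n)).powersetCard (n - k.val)).attach.sup'
    (attach_nonempty_iff.mpr (powersetCard_nonempty.mpr (by simp)))
    fun I => I.1.inf' (card_pos.mp (by
      have h := (mem_powersetCard.mp I.2).2
      have hk := k.isLt
      omega)) x

/-! In a distributive lattice (every vector lattice is one), replacing two entries `x i, x j` by
`x i ⊔ x j, x i ⊓ x j` changes none of the `M_k`: an infimum over a set containing `i` but not
`j` splits, by distributivity, into the infima of `x` over that set and over its image under the
transposition `(i j)`. For positive disjoint `f i, f j` the replacement `g` has `g j = 0`, so
`T f = T (M f) = T (M g) = T g = 0`. -/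

namespace Mk

variable {L : Type*} {n : ℕ}

section Lattice

variable [Lattice L] (x : Fin n → L) (k : Fin n)

lemma inf'_le {I : Finset (Fin n)} (hI : I.card = n - k) (hne : I.Nonempty) :
    I.inf' hne x ≤ Mk x k :=
  le_sup' (f := fun I : {I // I ∈ (univ : Finset (Fin n)).powersetCard (n - k)} =>
    I.1.inf' (card_pos.mp (by have := (mem_powersetCard.mp I.2).2; omega)) x)
    (mem_attach _ ⟨I, mem_powersetCard_univ.mpr hI⟩)

lemma le_of_forall_inf'_le {c : L}
    (h : ∀ I : Finset (Fin n), I.card = n - k → ∀ hne : I.Nonempty, I.inf' hne x ≤ c) :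
    Mk x k ≤ c :=
  sup'_le _ _ fun I _ => h I.1 (mem_powersetCard_univ.mp I.2) _

lemma comp_perm_le (σ : Equiv.Perm (Fin n)) : Mk (x ∘ σ) k ≤ Mk x k :=
  le_of_forall_inf'_le _ k fun I hI hne => by
    change I.inf' hne (x ∘ σ.toEmbedding) ≤ _
    rw [inf'_comp_eq_map]
    exact inf'_le x k (by rwa [card_map]) _

lemma comp_perm (σ : Equiv.Perm (Fin n)) : Mk (x ∘ σ) k = Mk x k :=
  (comp_perm_le x k σ).antisymm <| by
    simpa [Function.comp_assoc] using comp_perm_le (x ∘ σ) k σ⁻¹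

end Lattice

open Function

lemma le_update_sup_inf [Lattice L] (x : Fin n → L) {i j : Fin n} (hij : i ≠ j) (k : Fin n) :
    Mk x k ≤ Mk (update (update x i (x i ⊔ x j)) j (x i ⊓ x j)) k := by
  set y := update (update x i (x i ⊔ x j)) j (x i ⊓ x j)
  have hyi : y i = x i ⊔ x j := by simp [y, update_of_ne hij]
  have hyj : y j = x i ⊓ x j := by simp [y]
  have hy : ∀ t, t ≠ i → t ≠ j → y t = x t := fun t hti htj => by
    simp [y, update_of_ne hti, update_of_ne htj]
  refine le_of_forall_inf'_le x k fun I hI hne => ?_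
  by_cases hI' : j ∈ I ∧ i ∉ I
  · -- `I` meets the pair in `j` only; its image under the transposition meets it in `i`
    calc I.inf' hne x ≤ I.inf' hne (y ∘ Equiv.swap i j) := le_inf' _ _ fun t ht => by
          by_cases htj : t = j
          · rw [htj] at ht ⊢
            simpa [hyi] using le_sup_of_le_right (Finset.inf'_le x ht)
          · have hti : t ≠ i := fun h => hI'.2 (h ▸ ht)
            simpa [Equiv.swap_apply_of_ne_of_ne hti htj, hy t hti htj] using Finset.inf'_le x ht
      _ ≤ Mk y k := (comp_perm y k _).le.trans' (inf'_le _ k hI _)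
  · calc I.inf' hne x ≤ I.inf' hne y := le_inf' _ _ fun t ht => by
          by_cases hti : t = i
          · rw [hti] at ht ⊢; exact hyi ▸ le_sup_of_le_left (Finset.inf'_le x ht)
          by_cases htj : t = j
          · rw [htj] at ht ⊢
            have hiI : i ∈ I := not_not.mp fun h => hI' ⟨ht, h⟩
            exact hyj ▸ le_inf (Finset.inf'_le x hiI) (Finset.inf'_le x ht)
          · exact hy t hti htj ▸ Finset.inf'_le x ht
      _ ≤ Mk y k := inf'_le y k hI hne

lemma update_sup_inf_le [DistribLattice L] (x : Fin n → L) {i j : Fin n} (hij : i ≠ j)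
    (k : Fin n) : Mk (update (update x i (x i ⊔ x j)) j (x i ⊓ x j)) k ≤ Mk x k := by
  set y := update (update x i (x i ⊔ x j)) j (x i ⊓ x j)
  have hyi : y i = x i ⊔ x j := by simp [y, update_of_ne hij]
  have hyj : y j = x i ⊓ x j := by simp [y]
  have hy : ∀ t, t ≠ i → t ≠ j → y t = x t := fun t hti htj => by
    simp [y, update_of_ne hti, update_of_ne htj]
  refine le_of_forall_inf'_le y k fun I hI hne => ?_
  set w := I.inf' hne y
  by_cases hI' : i ∈ I ∧ j ∉ I
  · -- `w ≤ x i ⊔ x j` splits `w` into parts below the infima of `x` over `I` and over `(i j) I`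
    have hxi : w ⊓ x i ≤ I.inf' hne x := le_inf' _ _ fun t ht => by
      by_cases hti : t = i
      · exact hti ▸ inf_le_right
      · have htj : t ≠ j := fun h => hI'.2 (h ▸ ht)
        exact inf_le_left.trans (hy t hti htj ▸ Finset.inf'_le y ht)
    have hxj : w ⊓ x j ≤ I.inf' hne (x ∘ Equiv.swap i j) := le_inf' _ _ fun t ht => by
      by_cases hti : t = i
      · rw [hti]; simp
      · have htj : t ≠ j := fun h => hI'.2 (h ▸ ht)
        simpa [Equiv.swap_apply_of_ne_of_ne hti htj] using
          inf_le_left.trans (hy t hti htj ▸ Finset.inf'_le y ht)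
    calc w = w ⊓ (x i ⊔ x j) := (inf_eq_left.mpr (hyi ▸ Finset.inf'_le y hI'.1)).symm
      _ = w ⊓ x i ⊔ w ⊓ x j := inf_sup_left _ _ _
      _ ≤ Mk x k := sup_le (hxi.trans (inf'_le x k hI hne))
          (hxj.trans ((inf'_le _ k hI hne).trans (comp_perm x k _).le))
  · calc w ≤ I.inf' hne x := le_inf' _ _ fun t ht => by
          by_cases htj : t = j
          · rw [htj] at ht ⊢; exact ((Finset.inf'_le y ht).trans_eq hyj).trans inf_le_right
          by_cases hti : t = i
          · rw [hti] at ht ⊢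
            have hjI : j ∈ I := not_not.mp fun h => hI' ⟨ht, h⟩
            exact ((Finset.inf'_le y hjI).trans_eq hyj).trans inf_le_left
          · exact hy t hti htj ▸ Finset.inf'_le y ht
      _ ≤ Mk x k := inf'_le x k hI hne

theorem update_sup_inf [DistribLattice L] (x : Fin n → L) {i j : Fin n} (hij : i ≠ j)
    (k : Fin n) : Mk (update (update x i (x i ⊔ x j)) j (x i ⊓ x j)) k = Mk x k :=
  (update_sup_inf_le x hij k).antisymm (le_update_sup_inf x hij k)

end Mk

theorem statement12_general {E Y : Type*} [Lattice E] [AddCommGroup E] [Module ℝ E]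
    [CovariantClass E E (· + ·) (· ≤ ·)]
    [AddCommGroup Y] [Module ℝ Y] {n : ℕ}
    (T : MultilinearMap ℝ (fun _ : Fin n => E) Y)
    (hT : ∀ x : Fin n → E, (∀ i, 0 ≤ x i) → T x = T (fun k => Mk x k))
    (f : Fin n → E) (hf : ∀ i, 0 ≤ f i)
    (hd : ∃ i j, i ≠ j ∧ f i ⊓ f j = 0) :
    T f = 0 := by
  let := AddCommGroup.toDistribLattice E
  obtain ⟨i, j, hij, hfij⟩ := hd
  set g := Function.update (Function.update f i (f i ⊔ f j)) j (f i ⊓ f j)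
  have hg : ∀ t, 0 ≤ g t := fun t => by
    simp only [g, Function.update_apply]
    split_ifs
    exacts [le_inf (hf i) (hf j), le_sup_of_le_left (hf i), hf t]
  calc T f = T (fun k => Mk f k) := hT f hf
    _ = T (fun k => Mk g k) := by simp only [g, Mk.update_sup_inf f hij]
    _ = T g := (hT g hg).symm
    _ = 0 := T.map_coord_zero j (by simp [g, hfij])

/-- If `T : E^n → Y` is an `n`-linear map on a vector lattice `E` whose restriction to
`(E⁺)^n` is total orderization invariant, then `T(f_1,...,f_n) = 0` whenever
`f_1,...,f_n ∈ E⁺` and `f_i ⊓ f_j = 0` for some `i ≠ j`. -/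
theorem statement12 {E Y : Type*} [Lattice E] [AddCommGroup E] [Module ℝ E]
    [CovariantClass E E (· + ·) (· ≤ ·)] [PosSMulMono ℝ E]
    [AddCommGroup Y] [Module ℝ Y] {n : ℕ} (hn : 0 < n)
    (T : MultilinearMap ℝ (fun _ : Fin n => E) Y)
    (hT : ∀ x : Fin n → E, (∀ i, 0 ≤ x i) → T x = T (fun k => Mk x k))
    (f : Fin n → E) (hf : ∀ i, 0 ≤ f i)
    (hd : ∃ i j, i ≠ j ∧ f i ⊓ f j = 0) :
    T f = 0 :=
  statement12_general T hT f hf hd
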